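/- Let K be a real number with 0 < K < 1 and consider the polynomial q_K(z) = z(z+1)² - 4K. Then q_K has exactly one positive real root s, and s lies in the open interval (K, 1). -/

import Mathlib

/-! The map `x ↦ x (x + 1)²` is strictly increasing on `[0, ∞)`, which gives uniqueness; it takes
the value `K (K + 1)² < 4K` at `K` and `4 > 4K` at `1`, so the intermediate value theorem
places a root of `q_K` in `(K, 1)`. -/

theorem strictMonoOn_mul_add_one_sq : StrictMonoOn (fun x : ℝ => x * (x + 1) ^ 2) (Set.Ici 0) := by
  intro a ha b hb hab
  have ha : 0 ≤ a := ha
  have hb : 0 ≤ b := hb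
  have hsq : (a + 1) ^ 2 < (b + 1) ^ 2 := by gcongr
  calc a * (a + 1) ^ 2 ≤ a * (b + 1) ^ 2 := by gcongr
    _ < b * (b + 1) ^ 2 := by gcongr

theorem exists_mem_Ioo_mul_add_one_sq_eq {K : ℝ} (hK0 : 0 < K) (hK1 : K < 1) :
    ∃ s ∈ Set.Ioo K 1, s * (s + 1) ^ 2 = 4 * K := by
  have hcont : ContinuousOn (fun x : ℝ => x * (x + 1) ^ 2) (Set.Icc K 1) := by fun_prop
  have hlow : K * (K + 1) ^ 2 < 4 * K := by
    have : (K + 1) ^ 2 < 4 := by nlinarith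
    nlinarith
  have hhigh : 4 * K < 1 * (1 + 1) ^ 2 := by linarith
  exact intermediate_value_Ioo hK1.le hcont ⟨hlow, hhigh⟩

theorem stmt_7 (K : ℝ) (hK0 : 0 < K) (hK1 : K < 1) :
    ∃ s : ℝ, (0 < s ∧ s * (s + 1) ^ 2 - 4 * K = 0 ∧ s ∈ Set.Ioo K 1) ∧
      ∀ t : ℝ, 0 < t → t * (t + 1) ^ 2 - 4 * K = 0 → t = s := by
  obtain ⟨s, hs, hroot⟩ := exists_mem_Ioo_mul_add_one_sq_eq hK0 hK1
  have hs0 : 0 < s := hK0.trans hs.1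
  refine ⟨s, ⟨hs0, sub_eq_zero.mpr hroot, hs⟩, fun t ht hroot' => ?_⟩
  exact strictMonoOn_mul_add_one_sq.injOn (Set.mem_Ici.mpr ht.le) (Set.mem_Ici.mpr hs0.le)
    ((sub_eq_zero.mp hroot').trans hroot.symm)
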